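/- arXiv:2110.11050 — 3 statements merged into one kernel-verified Lean document; each statement's English description precedes it below -/
import Mathlib

section
/- The group PSL(2,7) has no subgroup isomorphic to the dihedral group of order 14. -/
open MatrixGroups Matrix

/-!
A dihedral subgroup of order 14 contains an element `x` of order 7 together with an element
conjugating `x` to `x⁻¹`. Lift `x` to `A ∈ SL(2, 𝔽₇)`; then `A ^ 7 = ±1`, and since
`trace (A ^ 7) = (trace A) ^ 7 = trace A` the lift can be chosen with `trace A = 2`, i.e.
`A = 1 + N` with `N ≠ 0` and `N * N = 0`. A lift `B` of the conjugating element satisfies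
`B A B⁻¹ = ±A⁻¹ = ±(1 - N)`; comparing traces rules out the minus sign, so `B N B⁻¹ = -N`.
Then `B` preserves the line `ker N` and, in a basis adapted to it, is triangular with diagonal
`(λ, -λ)`, so `-1 = -det B = λ²` would be a square in `𝔽₇`, which it is not as `7 ≡ 3 mod 4`.
-/

namespace Matrix

theorem mul_self_eq_trace_smul_sub_det_fin_two {R : Type*} [CommRing R]
    (M : Matrix (Fin 2) (Fin 2) R) : M * M = M.trace • M - M.det • 1 := by
  ext i j
  fin_cases i <;> fin_cases j <;> simp [mul_apply, trace_fin_two, det_fin_two] <;> ring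

theorem isSquare_neg_det_of_mul_eq_neg_mul {K : Type*} [Field K] {N B : Matrix (Fin 2) (Fin 2) K}
    (hN : N ≠ 0) (hNN : N * N = 0) (hBN : B * N = -(N * B)) : IsSquare (-B.det) := by
  obtain ⟨a, b, c, d, rfl⟩ : ∃ a b c d, N = !![a, b; c, d] := ⟨_, _, _, _, eta_fin_two N⟩
  obtain ⟨p, q, r, s, rfl⟩ : ∃ p q r s, B = !![p, q; r, s] := ⟨_, _, _, _, eta_fin_two B⟩
  rw [mul_fin_two, mul_fin_two] at hBN
  rw [mul_fin_two] at hNN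
  rw [← Matrix.ext_iff] at hBN hNN
  rw [Ne, ← Matrix.ext_iff] at hN
  simp only [Fin.forall_fin_two, of_apply, cons_val', cons_val_zero, cons_val_one, cons_val_fin_one,
    Matrix.zero_apply, Matrix.neg_apply] at hBN hNN hN
  rw [det_fin_two_of]
  obtain ⟨⟨h00, h01⟩, h10, -⟩ := hBN
  obtain ⟨⟨n00, n01⟩, n10, n11⟩ := hNN
  have hbc : b ≠ 0 ∨ c ≠ 0 := by
    by_contra! hbc
    obtain ⟨rfl, rfl⟩ := hbc
    exact hN ⟨⟨by simpa using n00, rfl⟩, rfl, by simpa using n11⟩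
  obtain rfl : d = -a := by
    rcases hbc with hb | hc
    · exact eq_neg_of_add_eq_zero_right <|
        (mul_eq_zero.1 (by linear_combination n01)).resolve_left hb
    · exact eq_neg_of_add_eq_zero_right <|
        (mul_eq_zero.1 (by linear_combination n10)).resolve_left hc
  -- the witness is `±` the eigenvalue of `B` on `ker N`, spanned by `(b, -a)` resp. `(a, c)`
  rcases hbc with hb | hc
  · obtain rfl : s = -p := eq_neg_of_add_eq_zero_right <|
      (mul_eq_zero.1 (by linear_combination h01)).resolve_left hb
    refine ⟨p - a * q / b, ?_⟩
    field_simp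
    linear_combination (-q ^ 2) * n00 + b * q * h00
  · obtain rfl : s = -p := eq_neg_of_add_eq_zero_right <|
      (mul_eq_zero.1 (by linear_combination h10)).resolve_left hc
    refine ⟨p - a * r / c, ?_⟩
    field_simp
    linear_combination (-r ^ 2) * n00 + c * r * h00

end Matrix

namespace Matrix.SpecialLinearGroup

section CommRing

variable {R : Type*} [CommRing R]

theorem trace_inv (A : SL(2, R)) :
    trace ((A⁻¹ : SL(2, R)) : Matrix (Fin 2) (Fin 2) R) = trace (A : Matrix (Fin 2) (Fin 2) R) := by
  simp [coe_inv, adjugate_fin_two, trace_fin_two, add_comm]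

theorem trace_conj (A B : SL(2, R)) :
    trace ((B * A * B⁻¹ : SL(2, R)) : Matrix (Fin 2) (Fin 2) R) =
      trace (A : Matrix (Fin 2) (Fin 2) R) := by
  rw [coe_mul, coe_mul, trace_mul_cycle, ← coe_mul, inv_mul_cancel, coe_one, one_mul]

theorem trace_eq_neg_of_conj_eq_neg_inv {A B : SL(2, R)} (hBA : B * A * B⁻¹ = -A⁻¹) :
    trace (A : Matrix (Fin 2) (Fin 2) R) = -trace (A : Matrix (Fin 2) (Fin 2) R) := by
  nth_rw 1 [← trace_conj A B]
  rw [hBA, coe_neg, trace_neg, trace_inv]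

end CommRing

variable {K : Type*} [Field K]

theorem eq_one_or_neg_one_of_mem_center {z : SL(2, K)} (hz : z ∈ Subgroup.center SL(2, K)) :
    z = 1 ∨ z = -1 := by
  obtain ⟨r, hr, hrz⟩ := mem_center_iff.1 hz
  rcases (by simpa using hr : r = 1 ∨ r = -1) with rfl | rfl
  · exact Or.inl (Subtype.ext (by rw [← hrz, map_one, coe_one]))
  · exact Or.inr (Subtype.ext (by rw [← hrz, map_neg, map_one, coe_neg, coe_one]))

theorem isSquare_neg_one_of_conj_eq_inv {A B : SL(2, K)}
    (hA : trace (A : Matrix (Fin 2) (Fin 2) K) = 2) (hA1 : A ≠ 1) (hBA : B * A * B⁻¹ = A⁻¹) :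
    IsSquare (-1 : K) := by
  set N : Matrix (Fin 2) (Fin 2) K := A - 1 with hN
  have hAN : (A : Matrix (Fin 2) (Fin 2) K) = 1 + N := by rw [hN]; abel
  have hNN : N * N = 0 := by
    rw [hN, sub_mul, mul_sub, mul_self_eq_trace_smul_sub_det_fin_two, hA, A.2, two_smul, one_smul,
      mul_one, one_mul]
    abel
  have hinv : ((A⁻¹ : SL(2, K)) : Matrix (Fin 2) (Fin 2) K) = 1 - N := by
    refine left_inv_eq_right_inv (a := (A : Matrix (Fin 2) (Fin 2) K)) ?_ ?_
    · rw [← coe_mul, inv_mul_cancel, coe_one]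
    · rw [hAN, add_mul, one_mul, mul_sub, mul_one, hNN]
      abel
  have hBN : (B : Matrix (Fin 2) (Fin 2) K) * N = -(N * B) := by
    have := congrArg (fun g : SL(2, K) => (g : Matrix (Fin 2) (Fin 2) K))
      (mul_inv_eq_iff_eq_mul.1 hBA)
    rw [coe_mul, coe_mul, hinv, hAN, mul_add, sub_mul, mul_one, one_mul, sub_eq_add_neg] at this
    exact add_left_cancel this
  have hN0 : N ≠ 0 := fun h => hA1 (Subtype.ext (by simp [hAN, h]))
  simpa [B.2] using isSquare_neg_det_of_mul_eq_neg_mul hN0 hNN hBN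

end Matrix.SpecialLinearGroup

namespace Matrix.ProjectiveSpecialLinearGroup

variable {p : ℕ} [Fact p.Prime]

theorem exists_mk_eq_trace_eq_two {x : PSL(2, ZMod p)} (hx : x ^ p = 1) :
    ∃ A : SL(2, ZMod p), (A : PSL(2, ZMod p)) = x ∧
      trace (A : Matrix (Fin 2) (Fin 2) (ZMod p)) = 2 := by
  obtain ⟨A, rfl⟩ := QuotientGroup.mk_surjective x
  have hcenter : A ^ p ∈ Subgroup.center SL(2, ZMod p) := by
    rwa [← QuotientGroup.eq_one_iff, QuotientGroup.mk_pow]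
  have htr : trace (A : Matrix (Fin 2) (Fin 2) (ZMod p)) =
      trace ((A ^ p : SL(2, ZMod p)) : Matrix (Fin 2) (Fin 2) (ZMod p)) := by
    rw [SpecialLinearGroup.coe_pow, ZMod.trace_pow_card, ZMod.pow_card]
  rcases SpecialLinearGroup.eq_one_or_neg_one_of_mem_center hcenter with h | h
  · refine ⟨A, rfl, ?_⟩
    rw [htr, h, SpecialLinearGroup.coe_one, trace_one]
    norm_num
  · refine ⟨-A, ?_, ?_⟩
    · rw [← neg_one_mul, QuotientGroup.mk_mul, (QuotientGroup.eq_one_iff _).2 (h ▸ hcenter),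
        one_mul]
    · rw [SpecialLinearGroup.coe_neg, trace_neg, htr, h, SpecialLinearGroup.coe_neg,
        SpecialLinearGroup.coe_one, trace_neg, trace_one]
      norm_num

theorem conj_ne_inv_of_orderOf_eq (hp : p % 4 = 3) {x y : PSL(2, ZMod p)} (hx : orderOf x = p) :
    y * x * y⁻¹ ≠ x⁻¹ := by
  intro hxy
  obtain ⟨A, rfl, hA⟩ := exists_mk_eq_trace_eq_two (hx ▸ pow_orderOf_eq_one x)
  obtain ⟨B, rfl⟩ := QuotientGroup.mk_surjective y
  have hA1 : A ≠ 1 := by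
    rintro rfl
    exact (Fact.out : p.Prime).one_lt.ne' (by simpa using hx.symm)
  obtain ⟨z, hz, hBA⟩ : ∃ z ∈ Subgroup.center SL(2, ZMod p), B * A * B⁻¹ = A⁻¹ * z := by
    refine ⟨A⁻¹⁻¹ * (B * A * B⁻¹), QuotientGroup.eq.1 ?_, by group⟩
    show ((A⁻¹ : SL(2, ZMod p)) : PSL(2, ZMod p)) = ((B * A * B⁻¹ : SL(2, ZMod p)) : PSL(2, ZMod p))
    rw [QuotientGroup.mk_inv, QuotientGroup.mk_mul, QuotientGroup.mk_mul, QuotientGroup.mk_inv]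
    exact hxy.symm
  rcases SpecialLinearGroup.eq_one_or_neg_one_of_mem_center hz with rfl | rfl
  · rw [mul_one] at hBA
    exact ZMod.exists_sq_eq_neg_one_iff.1
      (SpecialLinearGroup.isSquare_neg_one_of_conj_eq_inv hA hA1 hBA) hp
  · rw [mul_neg_one] at hBA
    have htr := SpecialLinearGroup.trace_eq_neg_of_conj_eq_neg_inv hBA
    rw [hA] at htr
    have hp4 : p ∣ 4 := (ZMod.natCast_eq_zero_iff 4 p).1 (by push_cast; linear_combination htr)
    have := Nat.le_of_dvd (by norm_num) hp4
    interval_cases p <;> omega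

end Matrix.ProjectiveSpecialLinearGroup

theorem DihedralGroup.exists_orderOf_eq_conj_eq_inv {G : Type*} [Group G] {n : ℕ}
    {f : DihedralGroup n →* G} (hf : Function.Injective f) :
    ∃ x y : G, orderOf x = n ∧ y * x * y⁻¹ = x⁻¹ :=
  ⟨f (.r 1), f (.sr 0), by rw [orderOf_injective f hf, DihedralGroup.orderOf_r_one], by
    rw [← map_inv, ← map_inv, ← map_mul, ← map_mul, DihedralGroup.inv_sr, DihedralGroup.sr_mul_r,
      DihedralGroup.sr_mul_sr, DihedralGroup.inv_r, zero_add, zero_sub]⟩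

/-- PSL(2,7) has no subgroup isomorphic to the dihedral group of order 14. -/
theorem PSL27_no_dihedral_14 :
    ¬ ∃ K : Subgroup PSL(2, ZMod 7), Nonempty (↥K ≃* DihedralGroup 7) := by
  rintro ⟨K, ⟨e⟩⟩
  have : Fact (Nat.Prime 7) := ⟨by norm_num⟩
  obtain ⟨x, y, hx, hxy⟩ := DihedralGroup.exists_orderOf_eq_conj_eq_inv
    (f := K.subtype.comp e.symm.toMonoidHom) (K.subtype_injective.comp e.symm.injective)
  exact ProjectiveSpecialLinearGroup.conj_ne_inv_of_orderOf_eq (by norm_num) hx hxy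
end

section
/- Every subgroup of index 7 in PSL(2,7) is isomorphic to the symmetric group S4. -/
/-!
A subgroup `K` of index 7 has order 24 and, like `PSL(2, 7)`, no element of order 6. If a
subgroup of order 3 of `K` were normal, the centralizer of its generator would have index at most
2, hence even order, and an involution commuting with an element of order 3 has order 6. So `K`
has four Sylow 3-subgroups. The kernel of the action of `K` on them lies in a normalizer of
order 6; an element of order 3 in it would lie in every Sylow 3-subgroup, and a kernel of order 2
would be central, again producing an element of order 6. Hence `K` embeds in `S₄`, and both
have order 24.
-/

open Subgroup

section

variable {G : Type*} [Group G]

theorem Subgroup.le_center_of_card_eq_two {N : Subgroup G} [N.Normal] (hN : Nat.card N = 2) :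
    N ≤ center G := by
  intro z hz
  rw [mem_center_iff]
  intro g
  by_cases hz1 : z = 1
  · simp [hz1]
  obtain ⟨w, -, hw⟩ := (Nat.card_eq_two_iff' (1 : N)).mp hN
  have hconj : g * z * g⁻¹ = z := by
    have h₁ := hw ⟨z, hz⟩ (by simpa [Subtype.ext_iff] using hz1)
    have h₂ := hw ⟨g * z * g⁻¹, Normal.conj_mem ‹_› z hz g⟩
      (by simpa [Subtype.ext_iff] using hz1)
    simpa [Subtype.ext_iff] using h₂.trans h₁.symm
  exact mul_inv_eq_iff_eq_mul.mp hconj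

theorem Sylow.mem_of_mem_normalizer_of_orderOf_eq {p : ℕ} {x : G}
    (hx : orderOf x = p) {P : Sylow p G} (hxP : x ∈ normalizer (P : Set G)) : x ∈ P := by
  have hp : IsPGroup p (zpowers x) :=
    IsPGroup.of_card (n := 1) (by rw [Nat.card_zpowers, hx, pow_one])
  have hmem : x ∈ zpowers x ⊓ normalizer (P : Set G) := ⟨mem_zpowers x, hxP⟩
  rw [hp.inf_normalizer_sylow P] at hmem
  exact hmem.2

variable [Finite G]

theorem Subgroup.index_centralizer_le_card_sub_one {N : Subgroup G} [N.Normal] {y : G}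
    (hy : y ∈ N) (hy1 : y ≠ 1) : (centralizer {y}).index ≤ Nat.card N - 1 := by
  have horbit : MulAction.orbit (ConjAct G) y ⊆ (N : Set G) \ {1} := by
    rintro _ ⟨c, rfl⟩
    refine ⟨Normal.conj_mem ‹_› y hy (ConjAct.ofConjAct c), ?_⟩
    simpa [ConjAct.smul_def] using hy1
  calc (centralizer {y}).index = (MulAction.stabilizer (ConjAct G) y).index := by
        rw [ConjAct.stabilizer_eq_centralizer]; rfl
    _ = (MulAction.orbit (ConjAct G) y).ncard := MulAction.index_stabilizer _ _
    _ ≤ ((N : Set G) \ {1}).ncard := Set.ncard_le_ncard horbit (Set.toFinite _)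
    _ = Nat.card N - 1 := by
        rw [Set.ncard_sdiff_singleton_of_mem N.one_mem, ← Nat.card_coe_set_eq]; rfl

theorem not_two_dvd_card_centralizer (horder : ∀ g : G, orderOf g ≠ 6) {y : G}
    (hy : orderOf y = 3) :
    ¬ 2 ∣ Nat.card (centralizer {y}) := by
  intro h2
  obtain ⟨z, hz⟩ := exists_prime_orderOf_dvd_card' 2 h2
  have hzy : Commute (z : G) y := mem_centralizer_singleton_iff.mp z.2
  apply horder (z * y)
  rw [hzy.orderOf_mul_eq_mul_orderOf_of_coprime (by rw [orderOf_coe, hz, hy]; norm_num),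
    orderOf_coe, hz, hy]

theorem Subgroup.not_normal_of_card_eq_three (horder : ∀ g : G, orderOf g ≠ 6)
    (h4 : 4 ∣ Nat.card G) {P : Subgroup G} (hP : Nat.card P = 3) : ¬ P.Normal := by
  intro hPn
  obtain ⟨y, hy⟩ := exists_prime_orderOf_dvd_card' (G := P) 3 (by rw [hP])
  have hy1 : (y : G) ≠ 1 := by
    intro h; rw [← orderOf_coe, h, orderOf_one] at hy; norm_num at hy
  have hindex := index_centralizer_le_card_sub_one y.2 hy1
  rw [hP] at hindex
  have hcard := card_mul_index (centralizer {(y : G)})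
  apply not_two_dvd_card_centralizer horder (y := y) (by rw [orderOf_coe, hy])
  have : (centralizer {(y : G)}).index ≠ 0 := index_ne_zero_of_finite
  interval_cases h : (centralizer {(y : G)}).index <;> omega

theorem Sylow.card_eq_three_of_card_eq_24 (hcard : Nat.card G = 24) (P : Sylow 3 G) :
    Nat.card P = 3 := by
  rw [P.card_eq_multiplicity, hcard, Nat.factorization_def _ Nat.prime_three,
    show 24 = 3 ^ 1 * 8 by rfl, padicValNat.mul (by positivity) (by positivity),
    padicValNat.prime_pow, padicValNat.eq_zero_of_not_dvd (by norm_num), add_zero, pow_one]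

theorem card_sylow_three_eq_four (hcard : Nat.card G = 24) (horder : ∀ g : G, orderOf g ≠ 6) :
    Nat.card (Sylow 3 G) = 4 := by
  obtain ⟨P⟩ : Nonempty (Sylow 3 G) := inferInstance
  have hP := P.card_eq_three_of_card_eq_24 hcard
  have hmod : Nat.card (Sylow 3 G) % 3 = 1 := card_sylow_modEq_one 3 G
  have hdvd : Nat.card (Sylow 3 G) ∣ 8 := by
    have h := card_mul_index (P : Subgroup G)
    rw [hP, hcard] at h
    exact (show (P : Subgroup G).index = 8 by omega) ▸ P.card_dvd_index
  have hne : Nat.card (Sylow 3 G) ≠ 1 := by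
    intro h1
    have : Subsingleton (Sylow 3 G) := (Nat.card_eq_one_iff_unique.mp h1).1
    exact not_normal_of_card_eq_three horder (by rw [hcard]; norm_num) hP P.normal_of_subsingleton
  have hle := Nat.le_of_dvd (by norm_num) hdvd
  interval_cases h : Nat.card (Sylow 3 G) <;> omega

theorem injective_toPermHom_sylow_three (hcard : Nat.card G = 24)
    (horder : ∀ g : G, orderOf g ≠ 6) :
    Function.Injective (MulAction.toPermHom G (Sylow 3 G)) := by
  set N := (MulAction.toPermHom G (Sylow 3 G)).ker
  have hN : ∀ P : Sylow 3 G, N ≤ normalizer (P : Set G) := fun P g hg => by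
    rw [← Sylow.stabilizer_eq_normalizer]
    exact congr($hg P)
  have hn3 := card_sylow_three_eq_four hcard horder
  obtain ⟨P⟩ : Nonempty (Sylow 3 G) := inferInstance
  have hNdvd : Nat.card N ∣ 6 := by
    have h := card_mul_index (normalizer (P : Set G))
    rw [← P.card_eq_index_normalizer, hn3, hcard] at h
    exact (show Nat.card (normalizer (P : Set G)) = 6 by omega) ▸ card_dvd_of_le (hN P)
  have hN3 : ¬ 3 ∣ Nat.card N := by
    intro h3
    obtain ⟨x, hx⟩ := exists_prime_orderOf_dvd_card' 3 h3
    rw [← orderOf_coe] at hx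
    have hxP : ∀ P : Sylow 3 G, zpowers (x : G) = P := fun P =>
      eq_of_le_of_card_ge (zpowers_le.mpr (Sylow.mem_of_mem_normalizer_of_orderOf_eq hx (hN P x.2)))
        (by rw [P.card_eq_three_of_card_eq_24 hcard, Nat.card_zpowers, hx])
    have : Subsingleton (Sylow 3 G) := ⟨fun P Q => Sylow.ext ((hxP P).symm.trans (hxP Q))⟩
    have := Finite.card_le_one_iff_subsingleton.mpr this
    omega
  have hN2 : Nat.card N ≠ 2 := by
    intro h2
    obtain ⟨y, hy⟩ := exists_prime_orderOf_dvd_card' (G := G) 3 (by rw [hcard]; norm_num)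
    apply not_two_dvd_card_centralizer horder hy
    rw [← h2]
    exact card_dvd_of_le ((le_center_of_card_eq_two h2).trans (center_le_centralizer _))
  rw [← MonoidHom.ker_eq_bot_iff, ← card_eq_one]
  have hle := Nat.le_of_dvd (by norm_num) hNdvd
  have hpos : 0 < Nat.card N := Nat.card_pos
  interval_cases h : Nat.card N <;> omega

theorem nonempty_mulEquiv_perm_fin_four (hcard : Nat.card G = 24)
    (horder : ∀ g : G, orderOf g ≠ 6) : Nonempty (G ≃* Equiv.Perm (Fin 4)) := by
  let e : Sylow 3 G ≃ Fin 4 :=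
    (Finite.equivFin _).trans (finCongr (card_sylow_three_eq_four hcard horder))
  let φ : G →* Equiv.Perm (Fin 4) :=
    e.permCongrHom.toMonoidHom.comp (MulAction.toPermHom G (Sylow 3 G))
  have hφ : Function.Bijective φ := (Nat.bijective_iff_injective_and_card φ).mpr
    ⟨e.permCongrHom.injective.comp (injective_toPermHom_sylow_three hcard horder),
      by rw [hcard, Nat.card_perm, Nat.card_fin]; rfl⟩
  exact ⟨MulEquiv.ofBijective φ hφ⟩

end

open MatrixGroups

set_option maxRecDepth 40000 in
lemma card_SL_two_zmod_seven : Nat.card SL(2, ZMod 7) = 336 := by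
  rw [Nat.card_eq_fintype_card]; decide

lemma card_center_SL_two_zmod_seven : Nat.card (Subgroup.center SL(2, ZMod 7)) = 2 := by
  have : Fact (Nat.Prime 7) := ⟨by norm_num⟩
  rw [Nat.card_congr (Matrix.SpecialLinearGroup.center_equiv_rootsOfUnity).toEquiv]
  simpa using (IsPrimitiveRoot.neg_one (R := ZMod 7) 7 (by norm_num)).card_rootsOfUnity

lemma card_PSL_two_zmod_seven : Nat.card PSL(2, ZMod 7) = 168 := by
  have h := (Subgroup.center SL(2, ZMod 7)).card_mul_index
  rw [card_center_SL_two_zmod_seven, card_SL_two_zmod_seven] at h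
  exact (Nat.eq_of_mul_eq_mul_left two_pos h.symm).symm

lemma mem_center_SL_two_zmod_seven_iff {s : SL(2, ZMod 7)} :
    s ∈ Subgroup.center SL(2, ZMod 7) ↔ s = 1 ∨ s = -1 := by
  have sq_eq_one : ∀ r : ZMod 7, r ^ 2 = 1 → r = 1 ∨ r = -1 := by decide
  rw [Matrix.SpecialLinearGroup.mem_center_iff]
  constructor
  · rintro ⟨r, hr, hrs⟩
    rcases sq_eq_one r hr with rfl | rfl
    · exact Or.inl (Subtype.ext (by simp [← hrs]))
    · exact Or.inr (Subtype.ext (by rw [← hrs, map_neg, map_one]; rfl))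
  · rintro (rfl | rfl)
    · exact ⟨1, by simp, by simp⟩
    · exact ⟨-1, by decide, by rw [map_neg, map_one]; rfl⟩

set_option maxRecDepth 40000 in
lemma SL_two_zmod_seven_pow_six : ∀ s : SL(2, ZMod 7), (s ^ 6 = 1 ∨ s ^ 6 = -1) →
    (s ^ 2 = 1 ∨ s ^ 2 = -1) ∨ (s ^ 3 = 1 ∨ s ^ 3 = -1) := by
  decide

lemma orderOf_PSL_two_zmod_seven_ne_six (g : PSL(2, ZMod 7)) : orderOf g ≠ 6 := by
  obtain ⟨s, rfl⟩ := QuotientGroup.mk_surjective g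
  have mk_pow_eq_one (n : ℕ) :
      (s : PSL(2, ZMod 7)) ^ n = 1 ↔ s ^ n = 1 ∨ s ^ n = -1 := by
    rw [← QuotientGroup.mk_pow, QuotientGroup.eq_one_iff, mem_center_SL_two_zmod_seven_iff]
  intro h6
  have h := pow_orderOf_eq_one (s : PSL(2, ZMod 7))
  rw [h6, mk_pow_eq_one] at h
  rcases SL_two_zmod_seven_pow_six s h with h | h <;>
    rw [← mk_pow_eq_one, ← orderOf_dvd_iff_pow_eq_one, h6] at h <;> norm_num at h

/-- Every subgroup of index 7 in PSL(2,7) is isomorphic to the symmetric group S₄. -/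
theorem index_seven_subgroup_of_PSL27_is_S4 (K : Subgroup PSL(2, ZMod 7))
    (hK : K.index = 7) : Nonempty (↥K ≃* Equiv.Perm (Fin 4)) := by
  have hcard : Nat.card K = 24 := by
    have h := K.card_mul_index
    rw [hK, card_PSL_two_zmod_seven] at h
    omega
  exact nonempty_mulEquiv_perm_fin_four hcard fun g =>
    orderOf_coe g ▸ orderOf_PSL_two_zmod_seven_ne_six g
end

section
/- There exists a surjective homomorphism from the triangle group (2,3,7) onto PSL(2,7). -/
/-!
Reduction modulo `p` composed with the projection to `PSL(2, ZMod p)` sends the modular generators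
`S = [[0, -1], [1, 0]]`, `S⁻¹ T⁻¹` and `T = [[1, 1], [0, 1]]` to elements of orders dividing
`2`, `3` and `p` whose product is `1`, because `S² = (S⁻¹ T⁻¹)³ = -1` and `Tᵖ ≡ 1 mod p`.
They generate, since `S` and `T` generate `SL(2, ℤ)` and `SL(2, ℤ) → SL(2, ZMod p)` is onto
(every transvection lifts, and transvections generate `SL(2)` of a field).
So the `(2, 3, p)` triangle group maps onto `PSL(2, p)` for every prime `p`.
-/

open MatrixGroups

/-- The triangle group ⟨x,y,z | x^p = y^q = z^r = xyz = 1⟩. -/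
def TriangleGroup (p q r : ℕ) : Type :=
  PresentedGroup ({FreeGroup.of 0 ^ p, FreeGroup.of 1 ^ q, FreeGroup.of 2 ^ r,
    FreeGroup.of 0 * FreeGroup.of 1 * FreeGroup.of 2} : Set (FreeGroup (Fin 3)))

instance (p q r : ℕ) : Group (TriangleGroup p q r) := by
  unfold TriangleGroup; infer_instance

open Matrix SpecialLinearGroup ModularGroup

namespace Matrix.SpecialLinearGroup

theorem SL2_map_surjective {R F : Type*} [CommRing R] [Field F] {f : R →+* F}
    (hf : Function.Surjective f) : Function.Surjective (map f : SL(2, R) →* SL(2, F)) := by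
  intro A
  induction A using SL2.transvection_induction with
  | htransvec i j h c =>
    obtain ⟨r, rfl⟩ := hf c
    exact ⟨transvection h r, by
      ext; simp [transvection_coe, Matrix.single_apply, Matrix.one_apply, apply_ite f]⟩
  | hmul A B hA hB =>
    obtain ⟨a, rfl⟩ := hA
    obtain ⟨b, rfl⟩ := hB
    exact ⟨a * b, map_mul _ a b⟩

theorem neg_one_mem_center {n R : Type*} [Fintype n] [DecidableEq n] [CommRing R]
    [Fact (Even (Fintype.card n))] : (-1 : SpecialLinearGroup n R) ∈ Subgroup.center _ :=
  Subgroup.mem_center_iff.mpr fun g ↦ by simp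

end Matrix.SpecialLinearGroup

namespace ModularGroup

theorem S_sq : S ^ 2 = -1 := by decide

theorem S_inv_mul_T_inv_pow_three : (S⁻¹ * T⁻¹) ^ 3 = -1 := by decide

def reducePSL (N : ℕ) : SL(2, ℤ) →* PSL(2, ZMod N) :=
  (QuotientGroup.mk' _).comp (map (Int.castRingHom (ZMod N)))

theorem reducePSL_neg_one (N : ℕ) : reducePSL N (-1) = 1 := by
  have : map (Int.castRingHom (ZMod N)) (-1 : SL(2, ℤ)) = -1 := by ext; simp
  exact (QuotientGroup.eq_one_iff _).mpr (this ▸ neg_one_mem_center)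

theorem reducePSL_T_pow (N : ℕ) : reducePSL N T ^ N = 1 := by
  have : map (Int.castRingHom (ZMod N)) (T ^ (N : ℤ)) = 1 := by
    ext i j
    rw [map_apply_coe, RingHom.mapMatrix_apply, coe_T_zpow]
    fin_cases i <;> fin_cases j <;> simp
  rw [← map_pow, ← zpow_natCast, reducePSL, MonoidHom.comp_apply, this, map_one]

theorem reducePSL_surjective (p : ℕ) [Fact p.Prime] : Function.Surjective (reducePSL p) :=
  (QuotientGroup.mk'_surjective _).comp (SL2_map_surjective ZMod.intCast_surjective)

end ModularGroup

namespace TriangleGroup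

variable {p q r : ℕ} {G : Type*} [Group G]

def lift (a b c : G) (ha : a ^ p = 1) (hb : b ^ q = 1) (hc : c ^ r = 1)
    (habc : a * b * c = 1) : TriangleGroup p q r →* G :=
  PresentedGroup.toGroup (f := ![a, b, c]) <| by
    rintro _ (rfl | rfl | rfl | rfl) <;> simpa

theorem lift_surjective {a b c : G} (ha : a ^ p = 1) (hb : b ^ q = 1) (hc : c ^ r = 1)
    (habc : a * b * c = 1) (hgen : Subgroup.closure {a, b, c} = ⊤) :
    Function.Surjective (lift a b c ha hb hc habc) := by
  rw [← MonoidHom.range_eq_top, eq_top_iff, ← hgen, Subgroup.closure_le]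
  rintro _ (rfl | rfl | rfl)
  exacts [⟨PresentedGroup.of 0, PresentedGroup.toGroup.of _⟩,
    ⟨PresentedGroup.of 1, PresentedGroup.toGroup.of _⟩,
    ⟨PresentedGroup.of 2, PresentedGroup.toGroup.of _⟩]

theorem exists_surjective_PSL_two_three (p : ℕ) [Fact p.Prime] :
    ∃ f : TriangleGroup 2 3 p →* PSL(2, ZMod p), Function.Surjective f := by
  set ρ := reducePSL p
  have hx : ρ S ^ 2 = 1 := by rw [← map_pow, S_sq, reducePSL_neg_one]
  have hy : ρ (S⁻¹ * T⁻¹) ^ 3 = 1 := by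
    rw [← map_pow, S_inv_mul_T_inv_pow_three, reducePSL_neg_one]
  have hxyz : ρ S * ρ (S⁻¹ * T⁻¹) * ρ T = 1 := by simp
  have hgen : Subgroup.closure {ρ S, ρ (S⁻¹ * T⁻¹), ρ T} = ⊤ := by
    have hSL : Subgroup.closure {S, S⁻¹ * T⁻¹, T} = ⊤ :=
      top_le_iff.mp <| SL2Z_generators ▸ Subgroup.closure_mono (by grind)
    rw [← Set.image_pair, ← Set.image_insert_eq, ← MonoidHom.map_closure, hSL,
      ← MonoidHom.range_eq_map, MonoidHom.range_eq_top]
    exact reducePSL_surjective p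
  exact ⟨_, lift_surjective hx hy (reducePSL_T_pow p) hxyz hgen⟩

end TriangleGroup

/-- There is a surjective homomorphism from the triangle group (2,3,7) onto PSL(2,7). -/
theorem triangle_2_3_7_surjects_onto_PSL27 :
    ∃ f : TriangleGroup 2 3 7 →* PSL(2, ZMod 7), Function.Surjective f :=
  haveI : Fact (Nat.Prime 7) := ⟨by norm_num⟩
  TriangleGroup.exists_surjective_PSL_two_three 7
end
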